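/- Let Λ = Λ(k[h], σ, a) be a generalized Weyl algebra over a field k of characteristic zero, with σ an automorphism of k[h] and a ∈ k[h] nonzero. Write a = p·b with p a prime (irreducible) factor of a. Then, inside Λ, the intersection of left ideals Λx ∩ Λp equals I(x,b)·p, where I(x,b) = Λx + Λb. -/

import Mathlib

open Polynomial

/-- Generators: `ι 0 = y`, `ι 1 = h`, `ι 2 = x`. Defining relations of the
generalized Weyl algebra `Λ(k[h], σ, a)`, where the automorphism `σ` of `k[h]`
is determined by `s = σ(h)` (so `σ(f) = f ∘ s`):
`xh = σ(h)x`, `hy = yσ(h)`, `yx = a(h)`, `xy = σ(a)(h)`. -/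
inductive gwaRelS (k : Type*) [CommRing k] (s a : Polynomial k) :
    FreeAlgebra k (Fin 3) → FreeAlgebra k (Fin 3) → Prop
  | xh : gwaRelS k s a (FreeAlgebra.ι k 2 * FreeAlgebra.ι k 1)
      (Polynomial.aeval (FreeAlgebra.ι k 1) s * FreeAlgebra.ι k 2)
  | hy : gwaRelS k s a (FreeAlgebra.ι k 1 * FreeAlgebra.ι k 0)
      (FreeAlgebra.ι k 0 * Polynomial.aeval (FreeAlgebra.ι k 1) s)
  | yx : gwaRelS k s a (FreeAlgebra.ι k 0 * FreeAlgebra.ι k 2)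
      (Polynomial.aeval (FreeAlgebra.ι k 1) a)
  | xy : gwaRelS k s a (FreeAlgebra.ι k 2 * FreeAlgebra.ι k 0)
      (Polynomial.aeval (FreeAlgebra.ι k 1) (a.comp s))

/-- The generalized Weyl algebra `Λ(k[h], σ, a)` with `σ(h) = s`. -/
abbrev GWAS (k : Type*) [CommRing k] (s a : Polynomial k) :=
  RingQuot (gwaRelS k s a)

/-- `y ∈ Λ`. -/
noncomputable def GWAS.y (k : Type*) [CommRing k] (s a : Polynomial k) :
    GWAS k s a :=
  RingQuot.mkAlgHom k (gwaRelS k s a) (FreeAlgebra.ι k 0)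

/-- `h ∈ Λ`. -/
noncomputable def GWAS.h (k : Type*) [CommRing k] (s a : Polynomial k) :
    GWAS k s a :=
  RingQuot.mkAlgHom k (gwaRelS k s a) (FreeAlgebra.ι k 1)

/-- `x ∈ Λ`. -/
noncomputable def GWAS.x (k : Type*) [CommRing k] (s a : Polynomial k) :
    GWAS k s a :=
  RingQuot.mkAlgHom k (gwaRelS k s a) (FreeAlgebra.ι k 2)

/-!
`Λ` acts on `ℤ →₀ k[h]` (`x` and `y` shift the index and twist by `σ`), and `z ↦ z • δ₀`
identifies `Λ` with this module: `Λ` is a free left `k[h]`-module on `v n = x ^ n`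
(`n ≥ 0`), `v n = y ^ (-n)` (`n < 0`). Since `v n g(h) = σⁿ(g)(h) v n`, right
multiplication by `g(h)` multiplies the `n`-th coordinate by `σⁿ(g)`, and right
multiplication by `x` makes the `n`-th coordinate divisible by `σⁿ(a)` for `n ≤ 0`.
So if `w p ∈ Λx`, cancelling `σⁿ(p)` shows that `σⁿ(b)` divides the `n`-th coordinate
of `w` for `n ≤ 0`; the terms of `w` with `n > 0` are left multiples of `x` and the
others left multiples of `v n b(h) = σⁿ(b)(h) v n`, so `w ∈ Λx + Λb`. Conversely
`(u x + v b) p = (u σ(p) + v y) x` because `b p = a = y x`.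
-/

theorem Polynomial.exists_algEquiv_apply_X_eq_of_degree_eq_one {k : Type*} [Field k]
    {s : k[X]} (hs : s.degree = 1) : ∃ σ : k[X] ≃ₐ[k] k[X], σ X = s := by
  obtain ⟨c, d, hc, rfl⟩ : ∃ c d : k, c ≠ 0 ∧ s = C c * X + C d :=
    ⟨_, _, coeff_ne_zero_of_eq_degree hs, eq_X_add_C_of_degree_le_one hs.le⟩
  refine ⟨algEquivOfCompEqX _ (C c⁻¹ * (X - C d)) ?_ ?_,
    by rw [algEquivOfCompEqX_apply, aeval_X]⟩
  · simp only [add_comp, mul_comp, C_comp, X_comp]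
    rw [← mul_assoc, ← C_mul, mul_inv_cancel₀ hc, C_1, one_mul, sub_add_cancel]
  · simp only [mul_comp, sub_comp, C_comp, X_comp, add_sub_cancel_right]
    rw [← mul_assoc, ← C_mul, inv_mul_cancel₀ hc, C_1, one_mul]

theorem Polynomial.algHom_apply_eq_comp {R F : Type*} [CommSemiring R] [FunLike F R[X] R[X]]
    [AlgHomClass F R R[X] R[X]] (φ : F) (f : R[X]) : φ f = f.comp (φ X) := by
  rw [comp_eq_aeval, aeval_algHom_apply, aeval_X_left_apply]

section Semiconj
variable {R A : Type*} [CommSemiring R] [Semiring A] [Algebra R A] {c t : A}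

theorem mul_aeval_eq_aeval_comp_mul {q : R[X]} (hct : c * t = aeval t q * c) (g : R[X]) :
    c * aeval t g = aeval t (g.comp q) * c := by
  induction g using Polynomial.induction_on with
  | C r => simp [Algebra.commutes]
  | add f g hf hg => simp only [map_add, add_comp, mul_add, add_mul, hf, hg]
  | monomial n r ih =>
    rw [pow_succ, ← mul_assoc, map_mul, aeval_X, ← mul_assoc, ih, mul_assoc, hct]
    simp only [mul_comp, X_comp, map_mul, mul_assoc]

theorem aeval_mul_eq_mul_aeval_comp {q : R[X]} (htc : t * c = c * aeval t q) (g : R[X]) :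
    aeval t g * c = c * aeval t (g.comp q) := by
  induction g using Polynomial.induction_on with
  | C r => simp [Algebra.commutes]
  | add f g hf hg => simp only [map_add, add_comp, mul_add, add_mul, hf, hg]
  | monomial n r ih =>
    rw [pow_succ, ← mul_assoc, map_mul, aeval_X, mul_assoc, htc, ← mul_assoc, ih]
    simp only [mul_comp, X_comp, map_mul, mul_assoc]

theorem pow_mul_aeval_eq_aeval_pow_mul {τ : R[X] ≃ₐ[R] R[X]}
    (hc : ∀ g, c * aeval t g = aeval t (τ g) * c) (n : ℕ) (g : R[X]) :
    c ^ n * aeval t g = aeval t ((τ ^ n) g) * c ^ n := by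
  induction n generalizing g with
  | zero => simp
  | succ n ih => rw [pow_succ, mul_assoc, hc, ← mul_assoc, ih, pow_succ, AlgEquiv.mul_apply,
      mul_assoc, ← pow_succ]

end Semiconj

namespace GWAS
variable {k : Type*} [CommRing k]

section Relations
variable {s a : k[X]}

theorem x_mul_h : x k s a * h k s a = aeval (h k s a) s * x k s a := by
  simpa only [map_mul, ← aeval_algHom_apply, x, h] using
    RingQuot.mkAlgHom_rel k (gwaRelS.xh (s := s) (a := a))

theorem h_mul_y : h k s a * y k s a = y k s a * aeval (h k s a) s := by
  simpa only [map_mul, ← aeval_algHom_apply, y, h] using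
    RingQuot.mkAlgHom_rel k (gwaRelS.hy (s := s) (a := a))

theorem y_mul_x : y k s a * x k s a = aeval (h k s a) a := by
  simpa only [map_mul, ← aeval_algHom_apply, x, y, h] using
    RingQuot.mkAlgHom_rel k (gwaRelS.yx (s := s) (a := a))

theorem x_mul_y : x k s a * y k s a = aeval (h k s a) (a.comp s) := by
  simpa only [map_mul, ← aeval_algHom_apply, x, y, h] using
    RingQuot.mkAlgHom_rel k (gwaRelS.xy (s := s) (a := a))

noncomputable def basisElt (n : ℤ) : GWAS k s a :=
  if 0 ≤ n then x k s a ^ n.toNat else y k s a ^ (-n).toNat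

theorem basisElt_of_nonneg {n : ℤ} (hn : 0 ≤ n) : basisElt n = x k s a ^ n.toNat := if_pos hn

theorem basisElt_of_nonpos {n : ℤ} (hn : n ≤ 0) : basisElt n = y k s a ^ (-n).toNat := by
  rcases hn.lt_or_eq with hn | rfl
  · exact if_neg hn.not_ge
  · simp [basisElt]

theorem basisElt_zero : basisElt 0 = (1 : GWAS k s a) := by simp [basisElt]

theorem y_mul_basisElt (n : ℤ) : y k s a * basisElt n =
    aeval (h k s a) (if 0 < n then a else 1) * basisElt (n - 1) := by
  rcases lt_or_ge 0 n with hn | hn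
  · rw [if_pos hn, basisElt_of_nonneg hn.le, basisElt_of_nonneg (by omega),
      show n.toNat = (n - 1).toNat + 1 by omega, pow_succ', ← mul_assoc, y_mul_x]
  · rw [if_neg hn.not_gt, basisElt_of_nonpos hn, basisElt_of_nonpos (by omega), map_one, one_mul,
      show (-(n - 1)).toNat = (-n).toNat + 1 by omega, pow_succ']

section Automorphism
variable {σ : k[X] ≃ₐ[k] k[X]} (hσ : σ X = s)
include hσ

theorem x_mul_aeval (g : k[X]) :
    x k s a * aeval (h k s a) g = aeval (h k s a) (σ g) * x k s a := by
  rw [mul_aeval_eq_aeval_comp_mul x_mul_h, ← hσ, ← algHom_apply_eq_comp]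

theorem y_mul_aeval (g : k[X]) :
    y k s a * aeval (h k s a) g = aeval (h k s a) (σ⁻¹ g) * y k s a := by
  rw [aeval_mul_eq_mul_aeval_comp h_mul_y, ← hσ, ← algHom_apply_eq_comp,
    ← AlgEquiv.mul_apply, mul_inv_cancel, AlgEquiv.one_apply]

theorem basisElt_mul_aeval (n : ℤ) (g : k[X]) :
    basisElt n * aeval (h k s a) g = aeval (h k s a) ((σ ^ n) g) * basisElt n := by
  rcases le_total 0 n with hn | hn
  · rw [basisElt_of_nonneg hn, pow_mul_aeval_eq_aeval_pow_mul (x_mul_aeval hσ), ← zpow_natCast,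
      Int.toNat_of_nonneg hn]
  · rw [basisElt_of_nonpos hn, pow_mul_aeval_eq_aeval_pow_mul (y_mul_aeval hσ), inv_pow,
      ← zpow_natCast, ← zpow_neg, Int.toNat_of_nonneg (by omega), neg_neg]

theorem x_mul_basisElt (n : ℤ) : x k s a * basisElt n =
    aeval (h k s a) (if n < 0 then σ a else 1) * basisElt (n + 1) := by
  rcases lt_or_ge n 0 with hn | hn
  · rw [if_pos hn, basisElt_of_nonpos hn.le, basisElt_of_nonpos (by omega),
      show (-n).toNat = (-(n + 1)).toNat + 1 by omega, pow_succ', ← mul_assoc, x_mul_y, ← hσ,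
      ← algHom_apply_eq_comp]
  · rw [if_neg hn.not_gt, basisElt_of_nonneg hn, basisElt_of_nonneg (by omega), map_one, one_mul,
      show (n + 1).toNat = n.toNat + 1 by omega, pow_succ']

theorem basisElt_mul_x (n : ℤ) : basisElt n * x k s a =
    aeval (h k s a) (if n + 1 ≤ 0 then (σ ^ (n + 1)) a else 1) * basisElt (n + 1) := by
  rcases lt_or_ge n 0 with hn | hn
  · rw [if_pos (by omega), basisElt_of_nonpos hn.le,
      show (-n).toNat = (-(n + 1)).toNat + 1 by omega, pow_succ, mul_assoc, y_mul_x,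
      ← basisElt_of_nonpos (by omega), basisElt_mul_aeval hσ]
  · rw [if_neg (by omega), basisElt_of_nonneg hn, basisElt_of_nonneg (by omega), map_one, one_mul,
      show (n + 1).toNat = n.toNat + 1 by omega, pow_succ]

end Automorphism
end Relations

section Representation
variable (σ : k[X] ≃ₐ[k] k[X]) (a : k[X])

noncomputable def hAct : Module.End k (ℤ →₀ k[X]) :=
  Algebra.lsmul k k (ℤ →₀ k[X]) (X : k[X])

noncomputable def xAct : Module.End k (ℤ →₀ k[X]) :=
  Finsupp.lsum k fun n => (Finsupp.lsingle (n + 1)).comp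
    ((LinearMap.mulLeft k (if n < 0 then σ a else 1)).comp σ.toLinearMap)

noncomputable def yAct : Module.End k (ℤ →₀ k[X]) :=
  Finsupp.lsum k fun n => (Finsupp.lsingle (n - 1)).comp
    ((LinearMap.mulLeft k (if 0 < n then a else 1)).comp σ⁻¹.toLinearMap)

noncomputable def freeRep : FreeAlgebra k (Fin 3) →ₐ[k] Module.End k (ℤ →₀ k[X]) :=
  FreeAlgebra.lift k ![yAct σ a, hAct, xAct σ a]

theorem aeval_hAct_single (g : k[X]) (n : ℤ) (f : k[X]) :
    aeval hAct g (Finsupp.single n f) = Finsupp.single n (g * f) := by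
  rw [hAct, aeval_algHom_apply, aeval_X_left_apply]
  exact Finsupp.smul_single g n f

theorem hAct_single (n : ℤ) (f : k[X]) :
    hAct (Finsupp.single n f) = Finsupp.single n (X * f) := by
  simpa using aeval_hAct_single X n f

theorem xAct_single (n : ℤ) (f : k[X]) : xAct σ a (Finsupp.single n f) =
    Finsupp.single (n + 1) ((if n < 0 then σ a else 1) * σ f) := by
  simp [xAct]

theorem yAct_single (n : ℤ) (f : k[X]) : yAct σ a (Finsupp.single n f) =
    Finsupp.single (n - 1) ((if 0 < n then a else 1) * σ⁻¹ f) := by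
  simp [yAct]

variable {σ a} {s : k[X]}

theorem freeRep_eq_of_gwaRelS (hσ : σ X = s) ⦃u v : FreeAlgebra k (Fin 3)⦄
    (huv : gwaRelS k s a u v) : freeRep σ a u = freeRep σ a v := by
  subst hσ
  cases huv <;>
  · simp only [freeRep, map_mul, ← aeval_algHom_apply, FreeAlgebra.lift_ι_apply]
    refine Finsupp.lhom_ext fun n f => ?_
    simp only [Module.End.mul_apply, xAct_single, yAct_single, hAct_single, aeval_hAct_single,
      Matrix.cons_val_zero, Matrix.cons_val_one, Matrix.cons_val_two, Matrix.head_cons,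
      Matrix.tail_cons, map_mul, apply_ite σ, apply_ite σ.symm, map_one, ← algHom_apply_eq_comp,
      AlgEquiv.aut_inv, AlgEquiv.symm_apply_apply, AlgEquiv.apply_symm_apply,
      add_sub_cancel_right, sub_add_cancel]
    congr 1
    split_ifs <;> first | omega | ring

end Representation

section Coordinates
variable {s a : k[X]} {σ : k[X] ≃ₐ[k] k[X]} (hσ : σ X = s)

noncomputable def rep : GWAS k s a →ₐ[k] Module.End k (ℤ →₀ k[X]) :=
  RingQuot.liftAlgHom k ⟨freeRep σ a, freeRep_eq_of_gwaRelS hσ⟩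

theorem rep_y : rep hσ (y k s a) = yAct σ a := by
  simp [rep, y, freeRep]

theorem rep_h : rep hσ (h k s a) = hAct := by
  simp [rep, h, freeRep]

theorem rep_x : rep hσ (x k s a) = xAct σ a := by
  simp [rep, x, freeRep]

variable (s a) in
noncomputable def ofCoeffs : (ℤ →₀ k[X]) →ₗ[k] GWAS k s a :=
  Finsupp.lsum k fun n => (LinearMap.mulRight k (basisElt n)).comp (aeval (h k s a)).toLinearMap

theorem ofCoeffs_single (n : ℤ) (f : k[X]) :
    ofCoeffs s a (Finsupp.single n f) = aeval (h k s a) f * basisElt n := by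
  simp [ofCoeffs]

theorem h_mul_ofCoeffs (m : ℤ →₀ k[X]) :
    h k s a * ofCoeffs s a m = ofCoeffs s a (hAct m) := by
  induction m using Finsupp.induction_linear with
  | zero => simp
  | add m m' hm hm' => rw [map_add, mul_add, hm, hm', map_add, map_add]
  | single n f =>
    rw [ofCoeffs_single, hAct_single, ofCoeffs_single, ← mul_assoc, map_mul, aeval_X]

include hσ

theorem x_mul_ofCoeffs (m : ℤ →₀ k[X]) :
    x k s a * ofCoeffs s a m = ofCoeffs s a (xAct σ a m) := by
  induction m using Finsupp.induction_linear with
  | zero => simp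
  | add m m' hm hm' => rw [map_add, mul_add, hm, hm', map_add, map_add]
  | single n f =>
    rw [ofCoeffs_single, xAct_single, ofCoeffs_single, ← mul_assoc, x_mul_aeval hσ, mul_assoc,
      x_mul_basisElt hσ, ← mul_assoc, ← map_mul, mul_comm (σ f)]

theorem y_mul_ofCoeffs (m : ℤ →₀ k[X]) :
    y k s a * ofCoeffs s a m = ofCoeffs s a (yAct σ a m) := by
  induction m using Finsupp.induction_linear with
  | zero => simp
  | add m m' hm hm' => rw [map_add, mul_add, hm, hm', map_add, map_add]
  | single n f =>
    rw [ofCoeffs_single, yAct_single, ofCoeffs_single, ← mul_assoc, y_mul_aeval hσ, mul_assoc,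
      y_mul_basisElt, ← mul_assoc, ← map_mul, mul_comm (σ⁻¹ f)]

theorem mul_ofCoeffs (z : GWAS k s a) (m : ℤ →₀ k[X]) :
    z * ofCoeffs s a m = ofCoeffs s a (rep hσ z m) := by
  obtain ⟨z, rfl⟩ := RingQuot.mkAlgHom_surjective k _ z
  induction z using FreeAlgebra.induction generalizing m with
  | grade0 r => simp [Algebra.smul_def]
  | grade1 i =>
    fin_cases i
    · change y k s a * _ = ofCoeffs s a (rep hσ (y k s a) m)
      rw [rep_y, y_mul_ofCoeffs hσ]
    · change h k s a * _ = ofCoeffs s a (rep hσ (h k s a) m)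
      rw [rep_h, h_mul_ofCoeffs]
    · change x k s a * _ = ofCoeffs s a (rep hσ (x k s a) m)
      rw [rep_x, x_mul_ofCoeffs hσ]
  | mul u v hu hv => rw [map_mul, mul_assoc, hv, hu, map_mul, Module.End.mul_apply]
  | add u v hu hv => rw [map_add, add_mul, hu, hv, map_add, LinearMap.add_apply, map_add]

theorem rep_basisElt_single_zero (n : ℤ) :
    rep hσ (basisElt n : GWAS k s a) (Finsupp.single 0 1) = Finsupp.single n 1 := by
  have hx (t : ℕ) : (xAct σ a ^ t) (Finsupp.single 0 1) = Finsupp.single (t : ℤ) 1 := by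
    induction t with
    | zero => rfl
    | succ t ih => rw [pow_succ', Module.End.mul_apply, ih, xAct_single, if_neg (by omega),
        map_one, one_mul, Nat.cast_succ]
  have hy (t : ℕ) : (yAct σ a ^ t) (Finsupp.single 0 1) = Finsupp.single (-(t : ℤ)) 1 := by
    induction t with
    | zero => rfl
    | succ t ih => rw [pow_succ', Module.End.mul_apply, ih, yAct_single, if_neg (by omega),
        map_one, one_mul, Nat.cast_succ, neg_add', sub_eq_add_neg]
  rcases le_total 0 n with hn | hn
  · rw [basisElt_of_nonneg hn, map_pow, rep_x, hx, Int.toNat_of_nonneg hn]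
  · rw [basisElt_of_nonpos hn, map_pow, rep_y, hy, Int.toNat_of_nonneg (by omega), neg_neg]

noncomputable def coordEquiv : GWAS k s a ≃ₗ[k] (ℤ →₀ k[X]) where
  toFun z := rep hσ z (Finsupp.single 0 1)
  map_add' z w := by rw [map_add, LinearMap.add_apply]
  map_smul' c z := by rw [map_smul, LinearMap.smul_apply, RingHom.id_apply]
  invFun := ofCoeffs s a
  left_inv z := by
    rw [← mul_ofCoeffs hσ, ofCoeffs_single, map_one, one_mul, basisElt_zero, mul_one]
  right_inv m := by
    change rep hσ (ofCoeffs s a m) (Finsupp.single 0 1) = m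
    induction m using Finsupp.induction_linear with
    | zero => simp
    | add m m' hm hm' => rw [map_add, map_add, LinearMap.add_apply, hm, hm']
    | single n f => rw [ofCoeffs_single, map_mul, ← aeval_algHom_apply, rep_h,
        Module.End.mul_apply, rep_basisElt_single_zero hσ, aeval_hAct_single, mul_one]

theorem coordEquiv_ofCoeffs (m : ℤ →₀ k[X]) : coordEquiv hσ (ofCoeffs s a m) = m :=
  (coordEquiv hσ).apply_symm_apply m

theorem ofCoeffs_coordEquiv (z : GWAS k s a) : ofCoeffs s a (coordEquiv hσ z) = z :=
  (coordEquiv hσ).symm_apply_apply z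

theorem induction_on_basisElt {P : GWAS k s a → Prop} (z : GWAS k s a) (zero : P 0)
    (add : ∀ u v, P u → P v → P (u + v))
    (basis : ∀ n (f : k[X]), P (aeval (h k s a) f * basisElt n)) : P z := by
  rw [← ofCoeffs_coordEquiv hσ z]
  induction coordEquiv hσ z using Finsupp.induction_linear with
  | zero => rwa [map_zero]
  | add m m' hm hm' => rw [map_add]; exact add _ _ hm hm'
  | single n f => rw [ofCoeffs_single]; exact basis n f

theorem coordEquiv_mul_x (u : GWAS k s a) (n : ℤ) : coordEquiv hσ (u * x k s a) n =
    (if n ≤ 0 then (σ ^ n) a else 1) * coordEquiv hσ u (n - 1) := by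
  induction u using induction_on_basisElt hσ with
  | zero => simp
  | add u v hu hv => rw [add_mul, map_add, map_add, Finsupp.add_apply, Finsupp.add_apply, hu, hv,
      mul_add]
  | basis j f =>
    rw [mul_assoc, basisElt_mul_x hσ, ← mul_assoc, ← map_mul, ← ofCoeffs_single,
      ← ofCoeffs_single, coordEquiv_ofCoeffs, coordEquiv_ofCoeffs]
    by_cases hj : n = j + 1
    · subst hj
      rw [Finsupp.single_eq_same, add_sub_cancel_right, Finsupp.single_eq_same, mul_comm]
    · rw [Finsupp.single_eq_of_ne hj, Finsupp.single_eq_of_ne (by omega), mul_zero]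

theorem coordEquiv_mul_aeval (u : GWAS k s a) (g : k[X]) (n : ℤ) :
    coordEquiv hσ (u * aeval (h k s a) g) n = (σ ^ n) g * coordEquiv hσ u n := by
  induction u using induction_on_basisElt hσ with
  | zero => simp
  | add u v hu hv => rw [add_mul, map_add, map_add, Finsupp.add_apply, Finsupp.add_apply, hu, hv,
      mul_add]
  | basis j f =>
    rw [mul_assoc, basisElt_mul_aeval hσ, ← mul_assoc, ← map_mul, ← ofCoeffs_single,
      ← ofCoeffs_single, coordEquiv_ofCoeffs, coordEquiv_ofCoeffs]
    by_cases hj : n = j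
    · subst hj
      rw [Finsupp.single_eq_same, Finsupp.single_eq_same, mul_comm]
    · rw [Finsupp.single_eq_of_ne hj, Finsupp.single_eq_of_ne hj, mul_zero]

theorem mem_span_x_aeval_of_dvd_coordEquiv (b : k[X]) (w : GWAS k s a)
    (hw : ∀ n ≤ 0, (σ ^ n) b ∣ coordEquiv hσ w n) :
    w ∈ Submodule.span (GWAS k s a) {x k s a, aeval (h k s a) b} := by
  rw [← ofCoeffs_coordEquiv hσ w, ofCoeffs, Finsupp.lsum_apply]
  refine Submodule.finsuppSum_mem _ _ _ _ fun n _ => ?_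
  simp only [LinearMap.comp_apply, AlgHom.toLinearMap_apply, LinearMap.mulRight_apply]
  rcases le_or_gt n 0 with hn | hn
  · obtain ⟨q, hq⟩ := hw n hn
    rw [hq, mul_comm, map_mul, mul_assoc, ← basisElt_mul_aeval hσ, ← mul_assoc]
    exact Submodule.smul_mem _ _ (Submodule.subset_span (Set.mem_insert_of_mem _ rfl))
  · have hv : basisElt (n - 1) * x k s a = basisElt n := by
      rw [basisElt_mul_x hσ, if_neg (by omega), map_one, one_mul, sub_add_cancel]
    rw [← hv, ← mul_assoc]
    exact Submodule.smul_mem _ _ (Submodule.subset_span (Set.mem_insert _ _))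

theorem mul_x_add_mul_aeval_mul_aeval {p b : k[X]} (hab : a = p * b) (u v : GWAS k s a) :
    (u * x k s a + v * aeval (h k s a) b) * aeval (h k s a) p =
      (u * aeval (h k s a) (σ p) + v * y k s a) * x k s a := by
  rw [add_mul, mul_assoc, x_mul_aeval hσ, mul_assoc v, ← map_mul, mul_comm b, ← hab,
    ← y_mul_x, add_mul, mul_assoc, mul_assoc]

end Coordinates
end GWAS

theorem gwa_ideal_intersection_general (k : Type*) [Field k]
    (s : k[X]) (hs : s.degree = 1) (a : k[X]) (ha : a ≠ 0)
    (p b : k[X]) (hab : a = p * b) :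
    {z : GWAS k s a | ∃ u, z = u * GWAS.x k s a} ∩
        {z : GWAS k s a | ∃ u, z = u * aeval (GWAS.h k s a) p} =
      {z : GWAS k s a | ∃ w,
        (∃ u v, w = u * GWAS.x k s a + v * aeval (GWAS.h k s a) b) ∧
        z = w * aeval (GWAS.h k s a) p} := by
  obtain ⟨σ, hσ⟩ := exists_algEquiv_apply_X_eq_of_degree_eq_one hs
  ext z
  constructor
  · rintro ⟨⟨u, rfl⟩, w, hw⟩
    suffices hI : ∀ n ≤ 0, (σ ^ n) b ∣ GWAS.coordEquiv hσ w n by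
      obtain ⟨v₁, v₂, hv⟩ :=
        Submodule.mem_span_pair.1 (GWAS.mem_span_x_aeval_of_dvd_coordEquiv hσ b w hI)
      exact ⟨w, ⟨v₁, v₂, hv.symm⟩, hw⟩
    intro n hn
    have hdvd : (σ ^ n) (p * b) ∣ GWAS.coordEquiv hσ (u * GWAS.x k s a) n := by
      rw [GWAS.coordEquiv_mul_x, if_pos hn, ← hab]
      exact dvd_mul_right _ _
    rw [hw, GWAS.coordEquiv_mul_aeval, map_mul] at hdvd
    have hp : (σ ^ n) p ≠ 0 := by
      simpa using left_ne_zero_of_mul (hab ▸ ha)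
    exact (mul_dvd_mul_iff_left hp).1 hdvd
  · rintro ⟨w, ⟨u, v, rfl⟩, rfl⟩
    exact ⟨⟨_, GWAS.mul_x_add_mul_aeval_mul_aeval hσ hab u v⟩, _, rfl⟩

/-- In a generalized Weyl algebra `Λ = Λ(k[h], σ, a)` (with `σ` the
automorphism of `k[h]` sending `h` to the degree-one polynomial `s`), if
`a = p·b` with `p` irreducible, then `Λx ∩ Λp = I(x,b)·p`, where
`I(x,b) = Λx + Λb`. -/
theorem gwa_ideal_intersection (k : Type*) [Field k] [CharZero k]
    (s : k[X]) (hs : s.degree = 1) (a : k[X]) (ha : a ≠ 0)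
    (p b : k[X]) (hp : Irreducible p) (hab : a = p * b) :
    {z : GWAS k s a | ∃ u, z = u * GWAS.x k s a} ∩
        {z : GWAS k s a | ∃ u, z = u * aeval (GWAS.h k s a) p} =
      {z : GWAS k s a | ∃ w,
        (∃ u v, w = u * GWAS.x k s a + v * aeval (GWAS.h k s a) b) ∧
        z = w * aeval (GWAS.h k s a) p} :=
  gwa_ideal_intersection_general k s hs a ha p b hab
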